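/- Let d ≥ 2. For every ε > 0 and every H¹(𝒢_ε^d)-function u: ‖∇𝒜u‖²_{L²(ℝ^d)} ≤ ε^{d−1} ‖u'‖²_{L²(𝒢_ε^d)}. (This is estimate (39) of Lemma 4.4.) -/

import Mathlib

open MeasureTheory ENNReal

noncomputable section

/-- Points of `ℝ^d` (with the Euclidean metric). -/
abbrev Pt (d : ℕ) := EuclideanSpace ℝ (Fin d)

/-- `X_ε^j`: the union of all lines parallel to the `j`-th coordinate axis through points
of `ε ℤ^d`. -/
def lineSet (d : ℕ) (ε : ℝ) (j : Fin d) : Set (Pt d) :=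
  {x | ∀ i, i ≠ j → ∃ n : ℤ, x i = ε * n}

/-- The `d`-dimensional cubic grid `𝒢_ε^d` of edgelength `ε`. -/
def grid (d : ℕ) (ε : ℝ) : Set (Pt d) := ⋃ j : Fin d, lineSet d ε j

/-- Integral over the grid with respect to the 1-dimensional Hausdorff measure of `ℝ^d`,
as a value in `[0,∞]`. -/
def gridInt (d : ℕ) (ε : ℝ) (f : Pt d → ℝ) : ℝ≥0∞ :=
  ∫⁻ x in grid d ε, ENNReal.ofReal (f x) ∂μH[1]

/-- `‖u‖²_{L²(𝒢_ε^d)}`, as a value in `[0,∞]`. -/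
def gridL2sq (d : ℕ) (ε : ℝ) (u : Pt d → ℝ) : ℝ≥0∞ := gridInt d ε (fun x => (u x) ^ 2)

/-- `‖u‖_{L^q(𝒢_ε^d)}^q`, as a value in `[0,∞]`. -/
def gridLq (d : ℕ) (ε q : ℝ) (u : Pt d → ℝ) : ℝ≥0∞ := gridInt d ε (fun x => |u x| ^ q)

/-- Update the `j`-th coordinate of a point of `ℝ^d`. -/
def upd {d : ℕ} (y : Pt d) (j : Fin d) (t : ℝ) : Pt d := WithLp.toLp 2 (Function.update y j t)

/-- `u` is an `H¹(𝒢_ε^d)`-function with edge derivative `g`: both are Borel, on every edge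
of the grid `u` is absolutely continuous with derivative `g` (expressed via the fundamental
theorem of calculus with `g` locally integrable on edges), and `u, g ∈ L²(𝒢_ε^d)`. -/
structure IsGridH1 (d : ℕ) (ε : ℝ) (u g : Pt d → ℝ) : Prop where
  meas_u : Measurable u
  meas_g : Measurable g
  intInt : ∀ (j : Fin d) (y : Pt d), (∀ i, i ≠ j → ∃ m : ℤ, y i = ε * m) →
    ∀ n : ℤ, IntervalIntegrable (fun t => g (upd y j t)) volume (ε * n) (ε * (n + 1))
  ftc : ∀ (j : Fin d) (y : Pt d), (∀ i, i ≠ j → ∃ m : ℤ, y i = ε * m) →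
    ∀ n : ℤ, ∀ s ∈ Set.Icc (ε * n) (ε * (n + 1)), ∀ t ∈ Set.Icc (ε * n) (ε * (n + 1)),
      u (upd y j t) - u (upd y j s) = ∫ r in s..t, g (upd y j r)
  finL2u : gridL2sq d ε u ≠ ∞
  finL2g : gridL2sq d ε g ≠ ∞

/-- `u` is a `W^{1,1}(𝒢_1^d)`-function with edge derivative `g`. -/
structure IsGridW11 (d : ℕ) (u g : Pt d → ℝ) : Prop where
  meas_u : Measurable u
  meas_g : Measurable g
  intInt : ∀ (j : Fin d) (y : Pt d), (∀ i, i ≠ j → ∃ m : ℤ, y i = (m : ℝ)) →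
    ∀ n : ℤ, IntervalIntegrable (fun t => g (upd y j t)) volume (n : ℝ) ((n : ℝ) + 1)
  ftc : ∀ (j : Fin d) (y : Pt d), (∀ i, i ≠ j → ∃ m : ℤ, y i = (m : ℝ)) →
    ∀ n : ℤ, ∀ s ∈ Set.Icc (n : ℝ) ((n : ℝ) + 1), ∀ t ∈ Set.Icc (n : ℝ) ((n : ℝ) + 1),
      u (upd y j t) - u (upd y j s) = ∫ r in s..t, g (upd y j r)
  finL1u : gridInt d 1 (fun x => |u x|) ≠ ∞
  finL1g : gridInt d 1 (fun x => |g x|) ≠ ∞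

/-- The vertex `ε k ∈ ε ℤ^d` of the grid. -/
def vert (d : ℕ) (ε : ℝ) (k : Fin d → ℤ) : Pt d := WithLp.toLp 2 (fun i => ε * k i)

/-- `v` is the piecewise-linear interpolation `ũ` of `u`: on each edge of the grid it is the
linear interpolation of the values of `u` at the two endpoints. -/
def IsInterp (d : ℕ) (ε : ℝ) (u v : Pt d → ℝ) : Prop :=
  ∀ (k : Fin d → ℤ) (j : Fin d) (t : ℝ), t ∈ Set.Icc (0:ℝ) 1 →
    v ((1 - t) • vert d ε k + t • vert d ε (fun i => if i = j then k i + 1 else k i)) =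
      (1 - t) * u (vert d ε k) + t * u (vert d ε (fun i => if i = j then k i + 1 else k i))

/-- The simplex `S_{k,σ}` inside the cube `C_k`. -/
def simplexS (d : ℕ) (ε : ℝ) (k : Fin d → ℤ) (σ : Equiv.Perm (Fin d)) : Set (Pt d) :=
  {x | (∀ i, x i ∈ Set.Icc (ε * k i) (ε * (k i + 1))) ∧
    ∀ a b : Fin d, a ≤ b → x (σ a) - ε * k (σ a) ≤ x (σ b) - ε * k (σ b)}

/-- `A` is the piecewise-affine extension `𝒜u` of `u`: it agrees with `u` on the vertex set
`ε ℤ^d` and is affine on each simplex `S_{k,σ}`. -/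
def IsAffExt (d : ℕ) (ε : ℝ) (u A : Pt d → ℝ) : Prop :=
  (∀ k : Fin d → ℤ, A (vert d ε k) = u (vert d ε k)) ∧
  ∀ (k : Fin d → ℤ) (σ : Equiv.Perm (Fin d)), ∃ (L : Pt d →L[ℝ] ℝ) (c : ℝ),
    ∀ x ∈ simplexS d ε k σ, A x = L x + c

/-- The Gagliardo–Nirenberg quotient `Q_{q,𝒢_ε^d}(u)` (with edge derivative `g`),
as a value in `[0,∞]`. -/
def Qgrid (d : ℕ) (ε q : ℝ) (u g : Pt d → ℝ) : ℝ≥0∞ :=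
  gridLq d ε q u /
    ((gridL2sq d ε u) ^ (((d : ℝ) + (2 - (d : ℝ)) * (q / 2)) / 2) *
     (gridL2sq d ε g) ^ ((q / 2 - 1) * (d : ℝ) / 2))

/-- The sharp Gagliardo–Nirenberg constant `K_{q,𝒢_ε^d}`, a supremum in `[0,∞]`. -/
def Kgrid (d : ℕ) (ε q : ℝ) : ℝ≥0∞ :=
  ⨆ (u : Pt d → ℝ) (g : Pt d → ℝ) (_ : IsGridH1 d ε u g)
    (_ : gridL2sq d ε u ≠ 0) (_ : gridL2sq d ε g ≠ 0), Qgrid d ε q u g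

/-- The Gagliardo–Nirenberg quotient `Q_{q,ℝ^d}(v)`, as a value in `[0,∞]`. -/
def QReal (d : ℕ) (q : ℝ) (v : Pt d → ℝ) : ℝ≥0∞ :=
  (∫⁻ x, ENNReal.ofReal (|v x| ^ q)) /
    ((∫⁻ x, ENNReal.ofReal ((v x) ^ 2)) ^ (((d : ℝ) + (2 - (d : ℝ)) * (q / 2)) / 2) *
     (∫⁻ x, ENNReal.ofReal (‖fderiv ℝ v x‖ ^ 2)) ^ ((q / 2 - 1) * (d : ℝ) / 2))

/-- `K^{Lip}_{q,ℝ^d}`: the supremum of the Gagliardo–Nirenberg quotient over nontrivial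
locally Lipschitz functions on `ℝ^d` with finite norms. -/
def KLip (d : ℕ) (q : ℝ) : ℝ≥0∞ :=
  ⨆ (v : Pt d → ℝ) (_ : LocallyLipschitz v)
    (_ : (∫⁻ x, ENNReal.ofReal ((v x) ^ 2)) ≠ 0)
    (_ : (∫⁻ x, ENNReal.ofReal ((v x) ^ 2)) ≠ ∞)
    (_ : (∫⁻ x, ENNReal.ofReal (|v x| ^ q)) ≠ ∞)
    (_ : (∫⁻ x, ENNReal.ofReal (‖fderiv ℝ v x‖ ^ 2)) ≠ 0)
    (_ : (∫⁻ x, ENNReal.ofReal (‖fderiv ℝ v x‖ ^ 2)) ≠ ∞), QReal d q v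

/-- The modified action functional `J̃_{λ,𝒢_ε^d}` (of a function `u` with edge derivative `g`). -/
def Jact (d : ℕ) (ε lam p : ℝ) (u g : Pt d → ℝ) : ℝ :=
  (1 / 2) * (gridL2sq d ε g).toReal + lam / (2 * d) * (gridL2sq d ε u).toReal
    - 1 / ((d : ℝ) * p) * (gridLq d ε p u).toReal

/-- Membership in the Nehari manifold `Ñ_{λ,𝒢_ε^d}`. -/
def InNehari (d : ℕ) (ε lam p : ℝ) (u g : Pt d → ℝ) : Prop :=
  IsGridH1 d ε u g ∧ gridL2sq d ε u ≠ 0 ∧ gridLq d ε p u ≠ ∞ ∧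
    (d : ℝ) * (gridL2sq d ε g).toReal + lam * (gridL2sq d ε u).toReal = (gridLq d ε p u).toReal

/-- `u` (with edge derivative `g`) is an action ground state at frequency `lam`. -/
def IsActionGS (d : ℕ) (ε lam p : ℝ) (u g : Pt d → ℝ) : Prop :=
  InNehari d ε lam p u g ∧
    ∀ v h, InNehari d ε lam p v h → Jact d ε lam p u g ≤ Jact d ε lam p v h

/-- The modified energy functional `Ẽ_{𝒢_ε^d}` (of a function `u` with edge derivative `g`). -/
def Egrid (d : ℕ) (ε p : ℝ) (u g : Pt d → ℝ) : ℝ :=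
  (1 / 2) * (gridL2sq d ε g).toReal - 1 / ((d : ℝ) * p) * (gridLq d ε p u).toReal

/-- `u` (with edge derivative `g`) is an energy ground state at mass `m`. -/
def IsEnergyGS (d : ℕ) (ε p m : ℝ) (u g : Pt d → ℝ) : Prop :=
  IsGridH1 d ε u g ∧ (gridL2sq d ε u).toReal = m ∧ gridLq d ε p u ≠ ∞ ∧
    ∀ v h, IsGridH1 d ε v h → (gridL2sq d ε v).toReal = m → gridLq d ε p v ≠ ∞ →
      Egrid d ε p u g ≤ Egrid d ε p v h

end

/-!
On a simplex `S_{k,σ}` write `𝒜u = L + c`. Both ends of the edge of `S_{k,σ}` in direction `j` are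
vertices of the simplex, so `ε L(e_j)` is the increment of `u` along that edge and, by
Cauchy–Schwarz on it, `ε ‖L‖² = ε ∑ⱼ L(e_j)² ≤ ∑ⱼ ∫_{edge j} u'²`. For fixed `σ` and `j`, as `k`
runs over `ℤ^d` this edge runs over every grid edge of direction `j` exactly once, and the
simplices `S_{0,σ}` are disjoint pieces of one cube, so `∑_σ |S_{0,σ}| ≤ ε^d`. Summing
`|S_{k,σ}| ‖L‖²` over all simplices, whose boundaries are null, gives `ε ‖∇𝒜u‖² ≤ ε^d ‖u'‖²`.
-/

open Set

theorem EuclideanSpace.opNorm_sq_eq_sum_sq {ι : Type*} [Fintype ι] [DecidableEq ι]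
    (L : StrongDual ℝ (EuclideanSpace ℝ ι)) :
    ‖L‖ ^ 2 = ∑ i, L (EuclideanSpace.single i 1) ^ 2 := by
  have hv : ∀ i, L (EuclideanSpace.single i 1) =
      (InnerProductSpace.toDual ℝ (EuclideanSpace ℝ ι)).symm L i := fun i => by
    rw [← InnerProductSpace.toDual_symm_apply, real_inner_comm,
      EuclideanSpace.inner_single_left, map_one, one_mul]
  rw [← LinearIsometryEquiv.norm_map (InnerProductSpace.toDual ℝ _).symm L,
    EuclideanSpace.real_norm_sq_eq]
  simp only [hv]

theorem MeasureTheory.Measure.addHaar_setOf_apply_eq {E : Type*} [NormedAddCommGroup E]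
    [NormedSpace ℝ E] [MeasurableSpace E] [BorelSpace E] [FiniteDimensional ℝ E] (μ : Measure E)
    [μ.IsAddHaarMeasure] {f : StrongDual ℝ E} (hf : f ≠ 0) (c : ℝ) :
    μ {x | f x = c} = 0 := by
  obtain ⟨z, hz⟩ : ∃ z, f z ≠ 0 := by
    by_contra! h
    exact hf (ContinuousLinearMap.ext h)
  set x₀ := (c / f z) • z
  have hx₀ : f x₀ = c := by simp [x₀, hz]
  have hlevel : {x | f x = c} = AffineSubspace.mk' x₀ (LinearMap.ker (f : E →ₗ[ℝ] ℝ)) := by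
    ext x
    simp [AffineSubspace.mem_mk', hx₀, sub_eq_zero]
  rw [hlevel]
  refine Measure.addHaar_affineSubspace μ _ fun htop => hz ?_
  have := congrArg AffineSubspace.direction htop
  rw [AffineSubspace.direction_mk', AffineSubspace.direction_top] at this
  exact LinearMap.congr_fun (LinearMap.ker_eq_top.mp this) z

theorem ofReal_sq_intervalIntegral_le {a b : ℝ} (hab : a ≤ b) {h : ℝ → ℝ}
    (hint : IntervalIntegrable h volume a b) :
    ENNReal.ofReal ((∫ t in a..b, h t) ^ 2) ≤
      ENNReal.ofReal (b - a) * ∫⁻ t in Ioo a b, ENNReal.ofReal (h t ^ 2) := by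
  have hsq : ∀ x : ℝ, ENNReal.ofReal (x ^ 2) = ‖x‖ₑ ^ (2 : ℝ) := fun x => by
    rw [Real.enorm_eq_ofReal_abs, ENNReal.ofReal_rpow_of_nonneg (abs_nonneg x) zero_le_two]
    norm_num
  have hHolder := ENNReal.lintegral_mul_le_Lp_mul_Lq (volume.restrict (Ioc a b))
    Real.HolderConjugate.two_two hint.1.aestronglyMeasurable.enorm (aemeasurable_const (b := 1))
  simp only [Pi.mul_apply, mul_one, ENNReal.one_rpow, setLIntegral_const, Real.volume_Ioc,
    one_mul] at hHolder
  calc ENNReal.ofReal ((∫ t in a..b, h t) ^ 2) = ‖∫ t in Ioc a b, h t‖ₑ ^ (2 : ℝ) := by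
        rw [hsq, intervalIntegral.integral_of_le hab]
    _ ≤ ((∫⁻ t in Ioc a b, ‖h t‖ₑ ^ (2 : ℝ)) ^ (1 / 2 : ℝ) *
          ENNReal.ofReal (b - a) ^ (1 / 2 : ℝ)) ^ (2 : ℝ) := by
        gcongr
        exact (enorm_integral_le_lintegral_enorm _).trans hHolder
    _ = ENNReal.ofReal (b - a) * ∫⁻ t in Ioo a b, ENNReal.ofReal (h t ^ 2) := by
        rw [ENNReal.mul_rpow_of_nonneg _ _ zero_le_two, ← ENNReal.rpow_mul, ← ENNReal.rpow_mul,
          Measure.restrict_congr_set Ioo_ae_eq_Ioc]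
        simp only [hsq]
        norm_num [mul_comm]

theorem ENNReal.tsum_prod_mul_sum_add_eq {G ι κ : Type*} [AddGroup G] [Fintype ι] [Fintype κ]
    (w : κ → ℝ≥0∞) (E : ι → G → ℝ≥0∞) (s : κ → ι → G) :
    ∑' p : G × κ, w p.2 * ∑ i, E i (p.1 + s p.2 i) = (∑ c, w c) * ∑' q : ι × G, E q.1 q.2 := by
  have htranslate : ∀ c i, ∑' g, E i (g + s c i) = ∑' g, E i g :=
    fun c i => (Equiv.addRight (s c i)).tsum_eq (E i)
  rw [ENNReal.tsum_prod', ENNReal.tsum_comm, ENNReal.tsum_prod', tsum_fintype, tsum_fintype,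
    Finset.sum_mul]
  refine Finset.sum_congr rfl fun c _ => ?_
  dsimp only
  rw [ENNReal.tsum_mul_left, Summable.tsum_finsetSum fun _ _ => ENNReal.summable]
  simp only [htranslate]

section Edges

variable {d : ℕ} {ε : ℝ}

theorem isometry_upd (y : Pt d) (j : Fin d) : Isometry (upd y j) := by
  refine Isometry.of_dist_eq fun s t => ?_
  rw [EuclideanSpace.dist_eq, Finset.sum_eq_single j]
  · simp [upd, Real.sqrt_sq_eq_abs, Real.dist_eq]
  · intro i _ hij
    simp [upd, Function.update_of_ne hij]
  · simp

theorem measurableEmbedding_upd (y : Pt d) (j : Fin d) : MeasurableEmbedding (upd y j) :=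
  (isometry_upd y j).isClosedEmbedding.measurableEmbedding

theorem setLIntegral_image_upd (y : Pt d) (j : Fin d) (s : Set ℝ) (F : Pt d → ℝ≥0∞) :
    ∫⁻ x in upd y j '' s, F x ∂μH[1] = ∫⁻ t in s, F (upd y j t) := by
  have hemb := measurableEmbedding_upd y j
  rw [← Measure.restrict_restrict_of_subset (image_subset_range _ s),
    ← (isometry_upd y j).map_hausdorffMeasure (Or.inl zero_le_one), hausdorffMeasure_real,
    hemb.restrict_map, hemb.lintegral_map, hemb.injective.preimage_image]

theorem vert_add (a b : Fin d → ℤ) : vert d ε (a + b) = vert d ε a + vert d ε b := by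
  ext i
  simp [vert, mul_add]

theorem vert_single (j : Fin d) :
    vert d ε (Pi.single j 1) = ε • EuclideanSpace.single j (1 : ℝ) := by
  ext i
  by_cases hij : i = j
  · subst hij; simp [vert]
  · simp [vert, hij]

theorem upd_vert (v : Fin d → ℤ) (j : Fin d) (n : ℤ) :
    upd (vert d ε v) j (ε * n) = vert d ε (Function.update v j n) := by
  ext i
  by_cases hij : i = j
  · subst hij; simp [upd, vert]
  · simp [upd, vert, hij]

theorem floor_div_eq_of_mem_Ioo (hε : 0 < ε) {n : ℤ} {t : ℝ}
    (ht : t ∈ Ioo (ε * n) (ε * (n + 1))) : ⌊t / ε⌋ = n := by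
  rw [Int.floor_eq_iff, le_div_iff₀ hε, div_lt_iff₀ hε]
  constructor <;> linarith [ht.1, ht.2]

theorem mul_intCast_notMem_Ioo (hε : 0 < ε) (m n : ℤ) : ε * m ∉ Ioo (ε * n) (ε * (n + 1)) :=
  fun h => by
    have := floor_div_eq_of_mem_Ioo hε h
    rw [mul_div_cancel_left₀ _ hε.ne', Int.floor_intCast] at this
    exact (this ▸ h.1).false

def openEdge (d : ℕ) (ε : ℝ) (j : Fin d) (v : Fin d → ℤ) : Set (Pt d) :=
  upd (vert d ε v) j '' Ioo (ε * v j) (ε * (v j + 1))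

noncomputable def edgeEnergy (d : ℕ) (ε : ℝ) (g : Pt d → ℝ) (j : Fin d) (v : Fin d → ℤ) : ℝ≥0∞ :=
  ∫⁻ x in openEdge d ε j v, ENNReal.ofReal (g x ^ 2) ∂μH[1]

theorem measurableSet_openEdge (j : Fin d) (v : Fin d → ℤ) : MeasurableSet (openEdge d ε j v) :=
  (measurableEmbedding_upd _ _).measurableSet_image.2 measurableSet_Ioo

theorem coord_of_mem_openEdge {j : Fin d} {v : Fin d → ℤ} {x : Pt d}
    (hx : x ∈ openEdge d ε j v) :
    (∀ i, i ≠ j → x i = ε * v i) ∧ x j ∈ Ioo (ε * v j) (ε * (v j + 1)) := by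
  obtain ⟨t, ht, rfl⟩ := hx
  exact ⟨fun i hij => by simp [upd, vert, hij], by simpa [upd] using ht⟩

theorem openEdge_subset_grid (j : Fin d) (v : Fin d → ℤ) : openEdge d ε j v ⊆ grid d ε :=
  fun _ hx => mem_iUnion.2 ⟨j, fun i hij => ⟨v i, (coord_of_mem_openEdge hx).1 i hij⟩⟩

theorem pairwise_disjoint_openEdge (hε : 0 < ε) :
    Pairwise (Function.onFun Disjoint fun q : Fin d × (Fin d → ℤ) => openEdge d ε q.1 q.2) := by
  rintro ⟨j, v⟩ ⟨j', v'⟩ hne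
  refine disjoint_left.2 fun x hx hx' => ?_
  obtain ⟨hv, hj⟩ := coord_of_mem_openEdge hx
  obtain ⟨hv', hj'⟩ := coord_of_mem_openEdge hx'
  by_cases hjj : j = j'
  · subst hjj
    refine hne (Prod.ext rfl (funext fun i => ?_))
    by_cases hij : i = j
    · subst hij
      rw [← floor_div_eq_of_mem_Ioo hε hj, ← floor_div_eq_of_mem_Ioo hε hj']
    · exact_mod_cast mul_left_cancel₀ hε.ne' ((hv i hij).symm.trans (hv' i hij))
  · exact mul_intCast_notMem_Ioo hε _ _ (hv' j hjj ▸ hj)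

theorem tsum_edgeEnergy_le_gridL2sq (hε : 0 < ε) (g : Pt d → ℝ) :
    ∑' q : Fin d × (Fin d → ℤ), edgeEnergy d ε g q.1 q.2 ≤ gridL2sq d ε g := by
  simp only [edgeEnergy, gridL2sq, gridInt]
  rw [← lintegral_iUnion (s := fun q : Fin d × (Fin d → ℤ) => openEdge d ε q.1 q.2)
    (fun q => measurableSet_openEdge q.1 q.2) (pairwise_disjoint_openEdge hε)]
  exact lintegral_mono_set (iUnion_subset fun q => openEdge_subset_grid q.1 q.2)

theorem ofReal_sq_sub_le_edgeEnergy (hε : 0 < ε) {u g : Pt d → ℝ} (h : IsGridH1 d ε u g)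
    (v : Fin d → ℤ) (j : Fin d) :
    ENNReal.ofReal ((u (vert d ε (v + Pi.single j 1)) - u (vert d ε v)) ^ 2) ≤
      ENNReal.ofReal ε * edgeEnergy d ε g j v := by
  have hvert : ∀ i, i ≠ j → ∃ m : ℤ, vert d ε v i = ε * m := fun i _ => ⟨v i, rfl⟩
  have hlo : ε * (v j : ℝ) ≤ ε * (v j + 1) := by nlinarith
  have hftc := h.ftc j _ hvert (v j) _ ⟨le_rfl, hlo⟩ _ ⟨hlo, le_rfl⟩
  have hbot : upd (vert d ε v) j (ε * v j) = vert d ε v := by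
    rw [upd_vert, Function.update_eq_self]
  have htop : upd (vert d ε v) j (ε * (v j + 1)) = vert d ε (v + Pi.single j 1) := by
    have hupd : Function.update v j (v j + 1) = v + Pi.single j 1 := by
      funext i
      by_cases hij : i = j
      · subst hij; simp
      · simp [hij]
    exact_mod_cast (upd_vert v j (v j + 1)).trans (congrArg _ hupd)
  rw [htop, hbot] at hftc
  rw [hftc]
  calc _ ≤ ENNReal.ofReal (ε * (v j + 1) - ε * v j) *
        ∫⁻ t in Ioo (ε * v j) (ε * (v j + 1)), ENNReal.ofReal (g (upd (vert d ε v) j t) ^ 2) :=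
        ofReal_sq_intervalIntegral_le hlo (h.intInt j _ hvert (v j))
    _ = ENNReal.ofReal ε * edgeEnergy d ε g j v := by
        rw [edgeEnergy, openEdge, setLIntegral_image_upd]
        ring_nf

end Edges

section Simplices

variable {d : ℕ} {ε : ℝ}

/-- `k + cornerShift σ m` is the vertex of `S_{k,σ}` obtained from `k` by raising the coordinates
`σ m, σ (m + 1), …` by one; consecutive vertices differ by an edge in direction `σ m`. -/
def cornerShift (σ : Equiv.Perm (Fin d)) (m : ℕ) : Fin d → ℤ :=
  fun i => if m ≤ (σ.symm i : ℕ) then 1 else 0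

theorem vert_add_cornerShift_mem_simplexS (hε : 0 < ε) (k : Fin d → ℤ) (σ : Equiv.Perm (Fin d))
    (m : ℕ) : vert d ε (k + cornerShift σ m) ∈ simplexS d ε k σ := by
  refine ⟨fun i => ?_, fun a b hab => ?_⟩
  · simp only [vert, cornerShift, Pi.add_apply]
    split_ifs <;> push_cast <;> constructor <;> nlinarith
  · simp only [vert, cornerShift, Pi.add_apply, Equiv.symm_apply_apply]
    have : (a : ℕ) ≤ b := hab
    split_ifs <;> push_cast <;> first | omega | nlinarith

theorem cornerShift_succ_add_single (σ : Equiv.Perm (Fin d)) (j : Fin d) :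
    cornerShift σ (σ.symm j + 1) + Pi.single j 1 = cornerShift σ (σ.symm j) := by
  funext i
  by_cases hij : i = j
  · subst hij; simp [cornerShift]
  · have : (σ.symm i : ℕ) ≠ σ.symm j := fun h => hij (σ.symm.injective (Fin.ext h))
    simp only [cornerShift, Pi.add_apply, Pi.single_apply, hij, if_false, add_zero]
    split_ifs <;> omega

theorem ofReal_mul_ofReal_sq_apply_single_le (hε : 0 < ε) {u g A : Pt d → ℝ}
    (h : IsGridH1 d ε u g) (hAu : ∀ k, A (vert d ε k) = u (vert d ε k)) {k : Fin d → ℤ}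
    {σ : Equiv.Perm (Fin d)} {L : Pt d →L[ℝ] ℝ} {c : ℝ}
    (hLc : ∀ x ∈ simplexS d ε k σ, A x = L x + c) (j : Fin d) :
    ENNReal.ofReal ε * ENNReal.ofReal (L (EuclideanSpace.single j 1) ^ 2) ≤
      edgeEnergy d ε g j (k + cornerShift σ (σ.symm j + 1)) := by
  set b := k + cornerShift σ (σ.symm j + 1)
  have htop : b + Pi.single j 1 = k + cornerShift σ (σ.symm j) := by
    rw [add_assoc, cornerShift_succ_add_single]
  have hdiff : u (vert d ε (b + Pi.single j 1)) - u (vert d ε b) =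
      ε * L (EuclideanSpace.single j 1) := by
    rw [← hAu, ← hAu, hLc _ (htop ▸ vert_add_cornerShift_mem_simplexS hε k σ _),
      hLc _ (vert_add_cornerShift_mem_simplexS hε k σ _), vert_add, map_add, vert_single,
      map_smul, smul_eq_mul]
    ring
  have hε0 : ENNReal.ofReal ε ≠ 0 := (ENNReal.ofReal_pos.2 hε).ne'
  refine (ENNReal.mul_le_mul_iff_right hε0 ENNReal.ofReal_ne_top).1 ?_
  calc ENNReal.ofReal ε * (ENNReal.ofReal ε * ENNReal.ofReal (L (EuclideanSpace.single j 1) ^ 2))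
      = ENNReal.ofReal ((u (vert d ε (b + Pi.single j 1)) - u (vert d ε b)) ^ 2) := by
        rw [hdiff, ← ENNReal.ofReal_mul hε.le, ← ENNReal.ofReal_mul hε.le]
        ring_nf
    _ ≤ ENNReal.ofReal ε * edgeEnergy d ε g j b := ofReal_sq_sub_le_edgeEnergy hε h b j

theorem ofReal_mul_ofReal_opNorm_sq_le (hε : 0 < ε) {u g A : Pt d → ℝ}
    (h : IsGridH1 d ε u g) (hAu : ∀ k, A (vert d ε k) = u (vert d ε k)) {k : Fin d → ℤ}
    {σ : Equiv.Perm (Fin d)} {L : Pt d →L[ℝ] ℝ} {c : ℝ}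
    (hLc : ∀ x ∈ simplexS d ε k σ, A x = L x + c) :
    ENNReal.ofReal ε * ENNReal.ofReal (‖L‖ ^ 2) ≤
      ∑ j, edgeEnergy d ε g j (k + cornerShift σ (σ.symm j + 1)) := by
  rw [EuclideanSpace.opNorm_sq_eq_sum_sq, ENNReal.ofReal_sum_of_nonneg fun j _ => sq_nonneg _,
    Finset.mul_sum]
  exact Finset.sum_le_sum fun j _ => ofReal_mul_ofReal_sq_apply_single_le hε h hAu hLc j

end Simplices

section OpenSimplices

variable {d : ℕ} {ε : ℝ}

def openSimplex (d : ℕ) (ε : ℝ) (k : Fin d → ℤ) (σ : Equiv.Perm (Fin d)) : Set (Pt d) :=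
  {x | (∀ i, x i ∈ Ioo (ε * k i) (ε * (k i + 1))) ∧
    ∀ a b : Fin d, a < b → x (σ a) - ε * k (σ a) < x (σ b) - ε * k (σ b)}

theorem isOpen_openSimplex (k : Fin d → ℤ) (σ : Equiv.Perm (Fin d)) :
    IsOpen (openSimplex d ε k σ) := by
  have hcoord : ∀ i : Fin d, Continuous fun x : Pt d => x i := fun i => by fun_prop
  simp only [openSimplex, ofPred_and, ofPred_forall]
  exact (isOpen_iInter_of_finite fun i => isOpen_Ioo.preimage (hcoord i)).inter
    (isOpen_iInter_of_finite fun a => isOpen_iInter_of_finite fun b =>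
      isOpen_iInter_of_finite fun _ => isOpen_lt (by fun_prop) (by fun_prop))

theorem openSimplex_subset_simplexS (k : Fin d → ℤ) (σ : Equiv.Perm (Fin d)) :
    openSimplex d ε k σ ⊆ simplexS d ε k σ := fun _ ⟨hx, hσ⟩ =>
  ⟨fun i => Ioo_subset_Icc_self (hx i), fun a b hab => hab.eq_or_lt.elim
    (fun h => h ▸ le_rfl) (fun h => (hσ a b h).le)⟩

theorem setLIntegral_openSimplex_fderiv_sq {A : Pt d → ℝ} {k : Fin d → ℤ}
    {σ : Equiv.Perm (Fin d)} {L : Pt d →L[ℝ] ℝ} {c : ℝ}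
    (hLc : ∀ x ∈ simplexS d ε k σ, A x = L x + c) :
    ∫⁻ x in openSimplex d ε k σ, ENNReal.ofReal (‖fderiv ℝ A x‖ ^ 2) =
      volume (openSimplex d ε k σ) * ENNReal.ofReal (‖L‖ ^ 2) := by
  rw [setLIntegral_congr_fun (isOpen_openSimplex k σ).measurableSet fun x hx => ?_,
    setLIntegral_const, mul_comm]
  have hA : A =ᶠ[nhds x] fun y => L y + c :=
    Filter.eventuallyEq_of_mem ((isOpen_openSimplex k σ).mem_nhds hx)
      fun y hy => hLc y (openSimplex_subset_simplexS k σ hy)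
  rw [hA.fderiv_eq, (L.hasFDerivAt.add_const c).fderiv]

theorem openSimplex_eq_preimage_add (k : Fin d → ℤ) (σ : Equiv.Perm (Fin d)) :
    openSimplex d ε k σ = (· + -vert d ε k) ⁻¹' openSimplex d ε 0 σ := by
  ext x
  simp [openSimplex, vert, sub_eq_add_neg, mul_add, add_comm]

theorem volume_openSimplex (k : Fin d → ℤ) (σ : Equiv.Perm (Fin d)) :
    volume (openSimplex d ε k σ) = volume (openSimplex d ε 0 σ) := by
  rw [openSimplex_eq_preimage_add, measure_preimage_add_right]

theorem ofReal_mul_setLIntegral_openSimplex_le (hε : 0 < ε) {u g A : Pt d → ℝ}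
    (h : IsGridH1 d ε u g) (hAu : ∀ k, A (vert d ε k) = u (vert d ε k)) {k : Fin d → ℤ}
    {σ : Equiv.Perm (Fin d)} {L : Pt d →L[ℝ] ℝ} {c : ℝ}
    (hLc : ∀ x ∈ simplexS d ε k σ, A x = L x + c) :
    ENNReal.ofReal ε * ∫⁻ x in openSimplex d ε k σ, ENNReal.ofReal (‖fderiv ℝ A x‖ ^ 2) ≤
      volume (openSimplex d ε 0 σ) *
        ∑ j, edgeEnergy d ε g j (k + cornerShift σ (σ.symm j + 1)) := by
  rw [setLIntegral_openSimplex_fderiv_sq hLc, volume_openSimplex, mul_left_comm]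
  exact mul_le_mul_right (ofReal_mul_ofReal_opNorm_sq_le hε h hAu hLc) _

theorem disjoint_openSimplex {k : Fin d → ℤ} {σ τ : Equiv.Perm (Fin d)} (h : σ ≠ τ) :
    Disjoint (openSimplex d ε k σ) (openSimplex d ε k τ) := by
  refine disjoint_left.2 fun x ⟨_, hσ⟩ ⟨_, hτ⟩ => h ?_
  set f : Fin d → ℝ := fun i => x i - ε * k i
  have hσ' : StrictMono (f ∘ σ) := fun a b hab => hσ a b hab
  have hτ' : StrictMono (f ∘ τ) := fun a b hab => hτ a b hab
  have hrange : range (f ∘ σ) = range (f ∘ τ) := by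
    rw [range_comp, range_comp, Equiv.range_eq_univ, Equiv.range_eq_univ]
  have hf : Function.Injective f := by
    simpa using hσ'.injective.comp σ.symm.injective
  exact Equiv.ext fun a => hf (congrFun ((hσ'.range_inj hτ').1 hrange) a)

theorem sum_volume_openSimplex_le :
    ∑ σ : Equiv.Perm (Fin d), volume (openSimplex d ε 0 σ) ≤ ENNReal.ofReal ε ^ d := by
  have hcube : ⋃ σ, openSimplex d ε 0 σ ⊆ WithLp.ofLp ⁻¹' univ.pi fun _ => Ioo 0 ε :=
    iUnion_subset fun σ x hx => fun i _ => by simpa using hx.1 i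
  rw [← (measure_iUnion (fun σ τ h => disjoint_openSimplex h)
    fun σ => (isOpen_openSimplex 0 σ).measurableSet).trans (tsum_fintype _)]
  refine (measure_mono hcube).trans_eq ?_
  rw [(PiLp.volume_preserving_ofLp (Fin d)).measure_preimage
    (MeasurableSet.univ_pi fun _ => measurableSet_Ioo).nullMeasurableSet, volume_pi_pi]
  simp

end OpenSimplices

section Cover

variable {d : ℕ} {ε : ℝ}

theorem exists_mem_openSimplex (hε : 0 < ε) {x : Pt d} (hx : ∀ i (n : ℤ), x i ≠ ε * n)
    (hxx : ∀ i i', i ≠ i' → ∀ n : ℤ, x i - x i' ≠ ε * n) :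
    ∃ k σ, x ∈ openSimplex d ε k σ := by
  set k : Fin d → ℤ := fun i => ⌊x i / ε⌋
  set f : Fin d → ℝ := fun i => x i - ε * k i
  have hk : ∀ i, x i ∈ Ioo (ε * k i) (ε * (k i + 1)) := fun i => by
    have h₁ := Int.floor_le (x i / ε)
    have h₂ := Int.lt_floor_add_one (x i / ε)
    rw [le_div_iff₀' hε] at h₁
    rw [div_lt_iff₀' hε] at h₂
    exact ⟨h₁.lt_of_ne (hx i _).symm, h₂⟩
  have hf : Function.Injective f := fun i i' h => by
    by_contra hne
    exact hxx i i' hne (k i - k i') (by push_cast; linarith [show f i = f i' from h])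
  exact ⟨k, Tuple.sort f, hk, fun a b hab =>
    ((Tuple.monotone_sort f).strictMono_of_injective (hf.comp (Equiv.injective _))) hab⟩

theorem volume_compl_iUnion_openSimplex (hε : 0 < ε) :
    volume (⋃ p : (Fin d → ℤ) × Equiv.Perm (Fin d), openSimplex d ε p.1 p.2)ᶜ = 0 := by
  have hproj : ∀ i : Fin d, EuclideanSpace.proj i (EuclideanSpace.single i 1 : Pt d) = 1 :=
    fun i => by simp
  have hcoord : ∀ i (n : ℤ), volume {x : Pt d | x i = ε * n} = 0 := fun i n =>
    Measure.addHaar_setOf_apply_eq volume (f := EuclideanSpace.proj i)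
      (fun h => by simpa [h] using hproj i) _
  have hdiag : ∀ i i' : Fin d, i ≠ i' → ∀ n : ℤ, volume {x : Pt d | x i - x i' = ε * n} = 0 :=
    fun i i' hii' n => Measure.addHaar_setOf_apply_eq volume
      (f := EuclideanSpace.proj i - EuclideanSpace.proj i')
      (fun h => by simpa [hii'] using congrArg (· (EuclideanSpace.single i 1 : Pt d)) h) _
  refine measure_mono_null (fun x hx => ?_) (measure_union_null
    (measure_iUnion_null fun i => measure_iUnion_null (hcoord i))
    (measure_iUnion_null fun i => measure_iUnion_null fun i' =>
      measure_iUnion_null fun h => measure_iUnion_null (hdiag i i' h)))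
  by_contra hx'
  simp only [mem_union, mem_iUnion, mem_ofPred_eq, not_or, not_exists] at hx'
  obtain ⟨k, σ, hkσ⟩ := exists_mem_openSimplex hε hx'.1 hx'.2
  exact hx (mem_iUnion.2 ⟨(k, σ), hkσ⟩)

theorem lintegral_le_tsum_setLIntegral_openSimplex (hε : 0 < ε) (F : Pt d → ℝ≥0∞) :
    ∫⁻ x, F x ≤ ∑' p : (Fin d → ℤ) × Equiv.Perm (Fin d), ∫⁻ x in openSimplex d ε p.1 p.2, F x := by
  have hae : ∀ᵐ x, x ∈ ⋃ p : (Fin d → ℤ) × Equiv.Perm (Fin d), openSimplex d ε p.1 p.2 :=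
    mem_ae_iff.2 (volume_compl_iUnion_openSimplex hε)
  conv_lhs => rw [← Measure.restrict_eq_self_of_ae_mem hae]
  exact lintegral_iUnion_le _ _

end Cover

/-- estimate (39) of Lemma 4.4. -/
theorem stmt_6 (d : ℕ) (hd : 2 ≤ d) (ε : ℝ) (hε : 0 < ε)
    (u g A : Pt d → ℝ) (h1 : IsGridH1 d ε u g) (hA : IsAffExt d ε u A) :
    (∫⁻ x, ENNReal.ofReal (‖fderiv ℝ A x‖ ^ 2)) ≤
      ENNReal.ofReal (ε ^ (d - 1)) * gridL2sq d ε g := by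
  obtain ⟨hAu, hAL⟩ := hA
  choose L c hLc using hAL
  have hε0 : ENNReal.ofReal ε ≠ 0 := (ENNReal.ofReal_pos.2 hε).ne'
  refine (ENNReal.mul_le_mul_iff_right hε0 ENNReal.ofReal_ne_top).1 ?_
  calc ENNReal.ofReal ε * ∫⁻ x, ENNReal.ofReal (‖fderiv ℝ A x‖ ^ 2)
      ≤ ENNReal.ofReal ε * ∑' p : (Fin d → ℤ) × Equiv.Perm (Fin d),
          ∫⁻ x in openSimplex d ε p.1 p.2, ENNReal.ofReal (‖fderiv ℝ A x‖ ^ 2) := by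
        gcongr
        exact lintegral_le_tsum_setLIntegral_openSimplex hε _
    _ ≤ ∑' p : (Fin d → ℤ) × Equiv.Perm (Fin d), volume (openSimplex d ε 0 p.2) *
          ∑ j, edgeEnergy d ε g j (p.1 + cornerShift p.2 (p.2.symm j + 1)) := by
        rw [← ENNReal.tsum_mul_left]
        exact ENNReal.tsum_le_tsum fun p =>
          ofReal_mul_setLIntegral_openSimplex_le hε h1 hAu (hLc p.1 p.2)
    _ = (∑ σ, volume (openSimplex d ε 0 σ)) *
          ∑' q : Fin d × (Fin d → ℤ), edgeEnergy d ε g q.1 q.2 :=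
        ENNReal.tsum_prod_mul_sum_add_eq (fun σ => volume (openSimplex d ε 0 σ)) (edgeEnergy d ε g)
          fun σ j => cornerShift σ (σ.symm j + 1)
    _ ≤ ENNReal.ofReal ε ^ d * gridL2sq d ε g :=
        mul_le_mul' sum_volume_openSimplex_le (tsum_edgeEnergy_le_gridL2sq hε g)
    _ = ENNReal.ofReal ε * (ENNReal.ofReal (ε ^ (d - 1)) * gridL2sq d ε g) := by
        rw [ENNReal.ofReal_pow hε.le, ← mul_assoc, ← pow_succ', Nat.sub_add_cancel (by omega)]
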